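/- Let F be a finite field with q elements and let k, s, t be integers with 1 ≤ k ≤ s ≤ t and t > k, and set ω = k. For every function g : F^{t−k} × F^{s−k} → F, the fraction of pairs (A, B) of feature sets with |A| = t, |B| = s, |A ∩ B| = k (equivalently, the probability for a uniformly random such pair) for which g(rec_k(A), rec_k(B)) ∈ (A ∪ B) ∖ (A ∩ B) is at most 2 · q^{t+s−2k} · C(q, k−1) · (t−k+1) / (C(q, t+s−k) · k). (This is the explicit bound proved for the case ω = k of Theorem 5.) -/

import Mathlib

open Polynomial Finset

/-- The characteristic polynomial of a finite subset `A` of a field: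
`χ_A(X) = ∏_{a ∈ A} (X - a)`. -/
noncomputable def charPoly {F : Type*} [Field F] (A : Finset F) : F[X] :=
  ∏ a ∈ A, (X - C a)

/-- The deterministic vault record of a feature set `A` of size `n` with
parameter `k`: the tuple of coefficients of `X^k, …, X^{n−1}` of `χ_A`. -/
noncomputable def vRec {F : Type*} [Field F] (n k : ℕ) (A : Finset F) :
    Fin (n - k) → F :=
  fun j => (charPoly A).coeff (k + (j : ℕ))

/-!
Equal records of two `m`-sets force their characteristic polynomials to differ by a polynomial of
degree `< k`. Hence a set is determined by its record together with any `k` of its elements, and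
two distinct sets with the same record meet in fewer than `k` points.

If `g` outputs a point `x ∈ B \ A`, then `A` is recovered from `rec A`, `B` and `A ∩ B`, while `B`
runs over sets with a prescribed record containing `x`; these pairwise meet in fewer than `k`
points, so their `(k-1)`-subsets avoiding `x` are distinct and there are at most
`C(q-1,k-1)/C(m-1,k-1)` of them. On the other side, `(A, B) ↦ (A ∪ B, A ∩ B)` is onto the
pairs `S ⊆ U` with `#U = t+s-k`, `#S = k`, so there are at least `C(q,t+s-k)·C(t+s-k,k)`
overlapping pairs, and `C(t+s-k,k) ≥ t+s-k`.
-/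

section CharPoly

variable {F : Type*} [Field F]

theorem charPoly_monic (A : Finset F) : (charPoly A).Monic :=
  monic_prod_of_monic _ _ fun a _ => monic_X_sub_C a

theorem degree_charPoly (A : Finset F) : (charPoly A).degree = #A := by
  simp [charPoly, degree_prod]

theorem charPoly_injective : Function.Injective (charPoly : Finset F → F[X]) := fun A B h => by
  simpa [charPoly, roots_prod_X_sub_C] using congrArg roots h

theorem charPoly_dvd_charPoly {S A : Finset F} (h : S ⊆ A) : charPoly S ∣ charPoly A :=
  prod_dvd_prod_of_subset _ _ _ h

/-- The coefficients of index `≥ m` agree because both polynomials are monic of degree `m`. -/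
theorem degree_charPoly_sub_lt_of_vRec_eq {m k : ℕ} {A B : Finset F} (hA : #A = m) (hB : #B = m)
    (h : vRec m k A = vRec m k B) : (charPoly A - charPoly B).degree < k := by
  have hm : (charPoly A - charPoly B).degree < m := by
    rw [← hA, ← degree_charPoly A]
    exact degree_sub_lt_left (by rw [degree_charPoly, degree_charPoly, hA, hB])
      (charPoly_monic A).ne_zero (by rw [(charPoly_monic A).leadingCoeff,
        (charPoly_monic B).leadingCoeff])
  rw [degree_lt_iff_coeff_zero]
  intro N hkN
  by_cases hNm : N < m
  · have := congrFun h ⟨N - k, by omega⟩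
    simp only [vRec, Nat.add_sub_cancel' hkN] at this
    rw [coeff_sub, this, sub_self]
  · exact coeff_eq_zero_of_degree_lt (hm.trans_le (by exact_mod_cast not_lt.1 hNm))

/-- The difference of two candidates has degree `< k` but is divisible by `χ_S`, of degree `k`. -/
theorem eq_of_vRec_eq_of_subset {m k : ℕ} {S A B : Finset F} (hS : #S = k) (hSA : S ⊆ A)
    (hSB : S ⊆ B) (hA : #A = m) (hB : #B = m) (h : vRec m k A = vRec m k B) : A = B := by
  by_contra hne
  have hdvd := degree_le_of_dvd (dvd_sub (charPoly_dvd_charPoly hSA) (charPoly_dvd_charPoly hSB))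
    (sub_ne_zero.2 (charPoly_injective.ne hne))
  rw [degree_charPoly, hS] at hdvd
  exact (hdvd.trans_lt (degree_charPoly_sub_lt_of_vRec_eq hA hB h)).false

theorem card_inter_lt_of_vRec_eq [DecidableEq F] {m k : ℕ} {A B : Finset F} (hA : #A = m)
    (hB : #B = m) (hne : A ≠ B) (h : vRec m k A = vRec m k B) : #(A ∩ B) < k := by
  by_contra! hk
  obtain ⟨S, hS, hSk⟩ := exists_subset_card_eq hk
  exact hne (eq_of_vRec_eq_of_subset hSk (hS.trans inter_subset_left)
    (hS.trans inter_subset_right) hA hB h)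

end CharPoly

theorem Nat.self_le_choose {n k : ℕ} (hk : 0 < k) (hkn : k < n) : n ≤ n.choose k := by
  induction n generalizing k with
  | zero => omega
  | succ n ih =>
    obtain ⟨j, rfl⟩ := Nat.exists_eq_add_of_le' hk
    rcases Nat.eq_zero_or_pos j with rfl | hj
    · simp
    · have := ih hj (by omega)
      have := Nat.choose_pos (show j + 1 ≤ n by omega)
      rw [Nat.choose_succ_succ']
      omega

theorem Nat.choose_mul_eq_mul_choose_sub_one {m k : ℕ} (hk : 1 ≤ k) :
    m.choose k * k = m * (m - 1).choose (k - 1) := by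
  obtain ⟨k, rfl⟩ := Nat.exists_eq_add_of_le' hk
  cases m with
  | zero => simp
  | succ m => simpa using (Nat.add_one_mul_choose_eq m k).symm

theorem card_mul_choose_le_of_pairwise_card_inter_lt {α : Type*} [DecidableEq α]
    {U : Finset α} {𝓑 : Finset (Finset α)} {m j : ℕ} (h𝓑 : ∀ B ∈ 𝓑, B ⊆ U ∧ #B = m)
    (hinter : (𝓑 : Set (Finset α)).Pairwise fun B B' => #(B ∩ B') < j) :
    #𝓑 * m.choose j ≤ (#U).choose j := by
  have hdisj : (𝓑 : Set (Finset α)).PairwiseDisjoint (powersetCard j) := by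
    intro B hB B' hB' hne
    rw [Function.onFun, disjoint_left]
    intro P hP hP'
    rw [mem_powersetCard] at hP hP'
    have := card_le_card (subset_inter hP.1 hP'.1)
    have := hinter hB hB' hne
    omega
  calc #𝓑 * m.choose j = #(𝓑.biUnion (powersetCard j)) := by
        rw [card_biUnion hdisj, ← smul_eq_mul, ← sum_const]
        exact sum_congr rfl fun B hB => by rw [card_powersetCard, (h𝓑 B hB).2]
    _ ≤ #(U.powersetCard j) :=
        card_le_card (biUnion_subset.2 fun B hB => powersetCard_mono (h𝓑 B hB).1)
    _ = (#U).choose j := card_powersetCard _ _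

section Counting

variable {F : Type*} [Field F] [Fintype F] [DecidableEq F]

/-- Two distinct such sets share fewer than `k` points, one of which is `x`; so the
`(k-1)`-subsets of `B \ {x}` are distinct across the family. -/
theorem card_vRec_fiber_mem_mul_choose_le {m k : ℕ} (hk : 1 ≤ k) (x : F)
    (ρ : Fin (m - k) → F) :
    #{B : Finset F | #B = m ∧ vRec m k B = ρ ∧ x ∈ B} * (m - 1).choose (k - 1)
      ≤ (Fintype.card F - 1).choose (k - 1) := by
  set 𝓑 : Finset (Finset F) := {B | #B = m ∧ vRec m k B = ρ ∧ x ∈ B}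
  have hmem : ∀ B ∈ 𝓑, #B = m ∧ vRec m k B = ρ ∧ x ∈ B := fun B hB => by simpa [𝓑] using hB
  have hinj : Set.InjOn (fun B : Finset F => B.erase x) 𝓑 :=
    (erase_injOn' x).mono fun B hB => (hmem B hB).2.2
  have hpacking := card_mul_choose_le_of_pairwise_card_inter_lt (U := univ.erase x)
    (𝓑 := 𝓑.image fun B => B.erase x) (m := m - 1) (j := k - 1) ?_ ?_
  · rwa [card_image_of_injOn hinj, card_erase_of_mem (mem_univ x), card_univ] at hpacking
  · simp only [mem_image]
    rintro _ ⟨B, hB, rfl⟩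
    obtain ⟨hBm, -, hxB⟩ := hmem B hB
    exact ⟨erase_subset_erase x (subset_univ B), by rw [card_erase_of_mem hxB, hBm]⟩
  · simp only [coe_image]
    rintro _ ⟨B, hB, rfl⟩ _ ⟨B', hB', rfl⟩ hne
    obtain ⟨hBm, hBρ, hxB⟩ := hmem B hB
    obtain ⟨hB'm, hB'ρ, hxB'⟩ := hmem B' hB'
    have hlt := card_inter_lt_of_vRec_eq hBm hB'm (fun h => hne (by rw [h]))
      (hBρ.trans hB'ρ.symm)
    have hx : x ∈ B ∩ B' := mem_inter.2 ⟨hxB, hxB'⟩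
    have hpos := card_pos.2 ⟨x, hx⟩
    simp only [erase_inter, inter_erase, erase_idem, card_erase_of_mem hx]
    omega

theorem card_mem_of_vRec_mul_choose_le {m k : ℕ} (hk : 1 ≤ k) (h : (Fin (m - k) → F) → F) :
    #{B : Finset F | #B = m ∧ h (vRec m k B) ∈ B} * (m - 1).choose (k - 1)
      ≤ Fintype.card F ^ (m - k) * (Fintype.card F - 1).choose (k - 1) := by
  rw [card_eq_sum_card_fiberwise (f := vRec m k) (t := univ) fun _ _ => mem_univ _, sum_mul]
  calc _ ≤ ∑ _ρ : Fin (m - k) → F, (Fintype.card F - 1).choose (k - 1) := by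
        refine sum_le_sum fun ρ _ => le_trans (Nat.mul_le_mul_right _ (card_le_card ?_))
          (card_vRec_fiber_mem_mul_choose_le hk (h ρ) ρ)
        intro B
        simp only [mem_filter, mem_univ, true_and]
        rintro ⟨⟨hB, hx⟩, rfl⟩
        exact ⟨hB, rfl, hx⟩
    _ = _ := by simp

end Counting

section Pairs

variable {F : Type*} [Fintype F] [DecidableEq F]

variable (F) in
def overlapPairs (t s k : ℕ) : Finset (Finset F × Finset F) :=
  {p | #p.1 = t ∧ #p.2 = s ∧ #(p.1 ∩ p.2) = k}

theorem mem_overlapPairs {t s k : ℕ} {p : Finset F × Finset F} :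
    p ∈ overlapPairs F t s k ↔ #p.1 = t ∧ #p.2 = s ∧ #(p.1 ∩ p.2) = k := by
  simp [overlapPairs]

theorem card_filter_overlapPairs_swap {t s k : ℕ} (P : Finset F × Finset F → Prop)
    [DecidablePred P] :
    #{p ∈ overlapPairs F t s k | P p} = #{p ∈ overlapPairs F s t k | P p.swap} :=
  card_bij' (fun p _ => p.swap) (fun p _ => p.swap)
    (fun p hp => by
      simp only [mem_filter, mem_overlapPairs, Prod.fst_swap, Prod.snd_swap, Prod.swap_swap,
        inter_comm p.2] at hp ⊢
      tauto)
    (fun p hp => by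
      simp only [mem_filter, mem_overlapPairs, Prod.fst_swap, Prod.snd_swap, inter_comm p.2]
        at hp ⊢
      tauto)
    (fun _ _ => rfl) (fun _ _ => rfl)

theorem ncard_eq_card_overlapPairs {t s k : ℕ} :
    Set.ncard {p : Finset F × Finset F | #p.1 = t ∧ #p.2 = s ∧ #(p.1 ∩ p.2) = k}
      = #(overlapPairs F t s k) := by
  rw [← Set.ncard_coe_finset]
  simp [overlapPairs]

theorem ncard_eq_card_filter_overlapPairs {t s k : ℕ} (P : Finset F × Finset F → Prop)
    [DecidablePred P] :
    Set.ncard {p : Finset F × Finset F | #p.1 = t ∧ #p.2 = s ∧ #(p.1 ∩ p.2) = k ∧ P p}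
      = #{p ∈ overlapPairs F t s k | P p} := by
  rw [← Set.ncard_coe_finset]
  simp [overlapPairs, and_assoc]

theorem le_card_of_mem_overlapPairs {t s k : ℕ} {p : Finset F × Finset F}
    (hp : p ∈ overlapPairs F t s k) : t + s - k ≤ Fintype.card F := by
  rw [mem_overlapPairs] at hp
  have := card_union_add_card_inter p.1 p.2
  have := card_le_univ (p.1 ∪ p.2)
  omega

/-- `(U, S)` is hit by `A = S ∪ T`, `B = U \ T` for any `T ⊆ U \ S` of size `t - k`. -/
theorem choose_mul_choose_le_card_overlapPairs {t s k : ℕ} (hkt : k ≤ t) (hks : k ≤ s) :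
    (Fintype.card F).choose (t + s - k) * (t + s - k).choose k ≤ #(overlapPairs F t s k) := by
  have htarget : #((univ.powersetCard (t + s - k)).sigma fun U : Finset F => U.powersetCard k)
      = (Fintype.card F).choose (t + s - k) * (t + s - k).choose k := by
    rw [card_sigma, sum_congr rfl fun U hU => by rw [card_powersetCard, (mem_powersetCard.1 hU).2],
      sum_const, card_powersetCard, card_univ, smul_eq_mul]
  rw [← htarget]
  refine card_le_card_of_surjOn (fun p => ⟨p.1 ∪ p.2, p.1 ∩ p.2⟩) ?_
  rintro ⟨U, S⟩ hUS
  simp only [coe_sigma, Set.mem_sigma_iff, mem_coe, mem_powersetCard, subset_univ, true_and]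
    at hUS
  obtain ⟨hU, hSU, hS⟩ := hUS
  obtain ⟨T, hTU, hT⟩ := exists_subset_card_eq
    (show t - k ≤ #(U \ S) by rw [card_sdiff_of_subset hSU]; omega)
  have hST : Disjoint S T := disjoint_of_subset_right hTU disjoint_sdiff
  have hinter : (S ∪ T) ∩ (U \ T) = S := by
    ext a
    have := @hSU a
    have := @hTU a
    simp only [mem_inter, mem_union, mem_sdiff] at *
    tauto
  have hunion : (S ∪ T) ∪ (U \ T) = U := by
    ext a
    have := @hSU a
    have := @hTU a
    simp only [mem_union, mem_sdiff] at *
    tauto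
  refine ⟨(S ∪ T, U \ T), ?_, by simp only [hinter, hunion]⟩
  rw [mem_coe, mem_overlapPairs, hinter, card_union_of_disjoint hST,
    card_sdiff_of_subset (hTU.trans sdiff_subset)]
  omega

end Pairs

section Sides

variable {F : Type*} [Field F] [Fintype F] [DecidableEq F]

/-- Once the record of `A` is fixed, `A` is recovered from `A ∩ B`. -/
theorem card_overlapPairs_vRec_fiber_le {m m' k : ℕ} (r : Fin (m' - k) → F)
    (h : (Fin (m - k) → F) → F) :
    #{p ∈ overlapPairs F m' m k | vRec m' k p.1 = r ∧ h (vRec m k p.2) ∈ p.2}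
      ≤ m.choose k * #{B : Finset F | #B = m ∧ h (vRec m k B) ∈ B} := by
  refine card_le_mul_card_image_of_maps_to (f := Prod.snd) ?_ _ fun B hB => ?_
  · intro p hp
    simp only [mem_filter, mem_overlapPairs, mem_univ, true_and] at hp ⊢
    exact ⟨hp.1.2.1, hp.2.2⟩
  · simp only [mem_filter, mem_univ, true_and] at hB
    refine le_of_le_of_eq ?_ (by rw [card_powersetCard, hB.1] : #(B.powersetCard k) = _)
    refine card_le_card_of_injOn (fun p => p.1 ∩ p.2) (fun p hp => ?_) fun p hp p' hp' hpp' => ?_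
    · simp only [coe_filter, mem_filter, mem_overlapPairs, Set.mem_ofPred_eq] at hp
      rw [mem_coe, mem_powersetCard, ← hp.2]
      exact ⟨inter_subset_right, hp.1.1.2.2⟩
    · simp only [coe_filter, mem_filter, mem_overlapPairs, Set.mem_ofPred_eq] at hp hp'
      obtain ⟨⟨⟨hA, -, hS⟩, hr, -⟩, rfl⟩ := hp
      obtain ⟨⟨⟨hA', -, -⟩, hr', -⟩, hB'⟩ := hp'
      simp only at hpp'
      refine Prod.ext (eq_of_vRec_eq_of_subset hS inter_subset_left ?_ hA hA' (hr.trans hr'.symm))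
        hB'.symm
      rw [hpp']
      exact inter_subset_left

theorem card_overlapPairs_mem_sdiff_mul_le {m m' k : ℕ} (hk : 1 ≤ k) (hkm : k ≤ m)
    (G : (Fin (m' - k) → F) → (Fin (m - k) → F) → F) :
    #{p ∈ overlapPairs F m' m k | G (vRec m' k p.1) (vRec m k p.2) ∈ p.2 \ p.1} * k
      ≤ Fintype.card F ^ (m' - k) * Fintype.card F ^ (m - k)
          * (Fintype.card F - 1).choose (k - 1) * m := by
  set q := Fintype.card F
  have hfiber : ∀ r : Fin (m' - k) → F,
      #{p ∈ overlapPairs F m' m k | G (vRec m' k p.1) (vRec m k p.2) ∈ p.2 \ p.1 ∧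
        vRec m' k p.1 = r} * k ≤ q ^ (m - k) * (q - 1).choose (k - 1) * m := by
    intro r
    have hpos : 0 < (m - 1).choose (k - 1) := Nat.choose_pos (by omega)
    refine Nat.le_of_mul_le_mul_right ?_ hpos
    calc _ ≤ m.choose k * #{B : Finset F | #B = m ∧ G r (vRec m k B) ∈ B} * k
          * (m - 1).choose (k - 1) := by
          gcongr
          refine le_trans (card_le_card fun p => ?_) (card_overlapPairs_vRec_fiber_le r (G r))
          simp only [mem_filter, mem_sdiff]
          rintro ⟨hp, ⟨hG, -⟩, rfl⟩
          exact ⟨hp, rfl, hG⟩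
      _ = #{B : Finset F | #B = m ∧ G r (vRec m k B) ∈ B} * (m - 1).choose (k - 1)
          * (m * (m - 1).choose (k - 1)) := by
          rw [← Nat.choose_mul_eq_mul_choose_sub_one hk]
          ring
      _ ≤ q ^ (m - k) * (q - 1).choose (k - 1) * (m * (m - 1).choose (k - 1)) :=
          Nat.mul_le_mul_right _ (card_mem_of_vRec_mul_choose_le hk (G r))
      _ = _ := by ring
  rw [card_eq_sum_card_fiberwise (f := fun p => vRec m' k p.1) (t := univ) fun _ _ => mem_univ _,
    sum_mul]
  calc _ ≤ ∑ _r : Fin (m' - k) → F, q ^ (m - k) * (q - 1).choose (k - 1) * m :=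
        sum_le_sum fun r _ => by simpa only [filter_filter] using hfiber r
    _ = _ := by simp [q, mul_assoc]

theorem card_filter_mem_sdiff_inter_mul_le {k s t : ℕ} (hk : 1 ≤ k) (hks : k ≤ s) (hkt : k ≤ t)
    (g : ((Fin (t - k) → F) × (Fin (s - k) → F)) → F) :
    #{p ∈ overlapPairs F t s k | g (vRec t k p.1, vRec s k p.2) ∈ (p.1 ∪ p.2) \ (p.1 ∩ p.2)} * k
      ≤ Fintype.card F ^ (t - k) * Fintype.card F ^ (s - k)
          * (Fintype.card F - 1).choose (k - 1) * (t + s) := by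
  have hsplit :
      #{p ∈ overlapPairs F t s k | g (vRec t k p.1, vRec s k p.2) ∈ (p.1 ∪ p.2) \ (p.1 ∩ p.2)}
        ≤ #{p ∈ overlapPairs F t s k | g (vRec t k p.1, vRec s k p.2) ∈ p.1 \ p.2}
          + #{p ∈ overlapPairs F t s k | g (vRec t k p.1, vRec s k p.2) ∈ p.2 \ p.1} := by
    refine (card_le_card fun p hp => ?_).trans (card_union_le _ _)
    simp only [mem_union, mem_filter, mem_sdiff, mem_inter] at hp ⊢
    tauto
  have hleft : #{p ∈ overlapPairs F t s k | g (vRec t k p.1, vRec s k p.2) ∈ p.1 \ p.2} * k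
      ≤ Fintype.card F ^ (s - k) * Fintype.card F ^ (t - k)
          * (Fintype.card F - 1).choose (k - 1) * t := by
    rw [card_filter_overlapPairs_swap]
    exact card_overlapPairs_mem_sdiff_mul_le hk hkt fun r' r => g (r, r')
  have hright := card_overlapPairs_mem_sdiff_mul_le hk hks fun r r' => g (r, r')
  linarith [Nat.mul_le_mul_right k hsplit]

end Sides

theorem stmt12_general {F : Type*} [Field F] [Fintype F] [DecidableEq F]
    (k s t : ℕ) (hk : 1 ≤ k) (hks : k ≤ s) (htk : k < t)
    (g : ((Fin (t - k) → F) × (Fin (s - k) → F)) → F) :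
    (Set.ncard { p : Finset F × Finset F |
        p.1.card = t ∧ p.2.card = s ∧ (p.1 ∩ p.2).card = k ∧
        g (vRec t k p.1, vRec s k p.2) ∈ (p.1 ∪ p.2) \ (p.1 ∩ p.2) } : ℚ)
      / (Set.ncard { p : Finset F × Finset F |
          p.1.card = t ∧ p.2.card = s ∧ (p.1 ∩ p.2).card = k } : ℚ)
      ≤ ((2 * (Fintype.card F) ^ (t + s - 2 * k)
            * (Fintype.card F).choose (k - 1) * (t - k + 1) : ℕ) : ℚ)
        / (((Fintype.card F).choose (t + s - k) * k : ℕ) : ℚ) := by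
  rw [ncard_eq_card_filter_overlapPairs, ncard_eq_card_overlapPairs]
  set q := Fintype.card F
  set n := t + s - k
  rcases (overlapPairs F t s k).eq_empty_or_nonempty with hP | ⟨p, hp⟩
  · rw [hP, card_empty, Nat.cast_zero, div_zero]
    positivity
  have hqn : 0 < q.choose n := Nat.choose_pos (le_card_of_mem_overlapPairs hp)
  have hbad := card_filter_mem_sdiff_inter_mul_le hk hks htk.le g
  have hP : q.choose n * n ≤ #(overlapPairs F t s k) :=
    (Nat.mul_le_mul_left _ (Nat.self_le_choose hk (by omega))).trans
      (choose_mul_choose_le_card_overlapPairs htk.le hks)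
  have hpow : q ^ (t + s - 2 * k) = q ^ (t - k) * q ^ (s - k) := by
    rw [← pow_add]
    congr 1
    omega
  have hchoose : (q - 1).choose (k - 1) ≤ q.choose (k - 1) := Nat.choose_le_choose _ (q.sub_le 1)
  rw [div_le_div_iff₀ (by exact_mod_cast card_pos.2 ⟨p, hp⟩)
    (by exact_mod_cast Nat.mul_pos hqn hk)]
  norm_cast
  calc _ = _ * k * q.choose n := by ring
    _ ≤ q ^ (t - k) * q ^ (s - k) * (q - 1).choose (k - 1) * (t + s) * q.choose n :=
        Nat.mul_le_mul_right _ hbad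
    _ ≤ q ^ (t - k) * q ^ (s - k) * q.choose (k - 1) * (2 * n) * q.choose n := by
        gcongr
        omega
    _ = 2 * q ^ (t + s - 2 * k) * q.choose (k - 1) * (q.choose n * n) := by rw [hpow]; ring
    _ ≤ 2 * q ^ (t + s - 2 * k) * q.choose (k - 1) * #(overlapPairs F t s k) :=
        Nat.mul_le_mul_left _ hP
    _ ≤ 2 * q ^ (t + s - 2 * k) * q.choose (k - 1) * (t - k + 1) * #(overlapPairs F t s k) :=
        Nat.mul_le_mul_right _ (Nat.le_mul_of_pos_right _ (Nat.succ_pos _))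

/-- The case `ω = k` of Theorem 5: the probability (over uniformly random pairs
of feature sets of sizes `t`, `s` overlapping in `k` elements) that `g`
extracts an element of `(A ∪ B) ∖ (A ∩ B)` from the two deterministic vault
records is at most `2·q^{t+s−2k}·C(q,k−1)·(t−k+1) / (C(q,t+s−k)·k)`. -/
theorem stmt12 {F : Type*} [Field F] [Fintype F] [DecidableEq F]
    (k s t : ℕ) (hk : 1 ≤ k) (hks : k ≤ s) (hst : s ≤ t) (htk : k < t)
    (g : ((Fin (t - k) → F) × (Fin (s - k) → F)) → F) :
    (Set.ncard { p : Finset F × Finset F |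
        p.1.card = t ∧ p.2.card = s ∧ (p.1 ∩ p.2).card = k ∧
        g (vRec t k p.1, vRec s k p.2) ∈ (p.1 ∪ p.2) \ (p.1 ∩ p.2) } : ℚ)
      / (Set.ncard { p : Finset F × Finset F |
          p.1.card = t ∧ p.2.card = s ∧ (p.1 ∩ p.2).card = k } : ℚ)
      ≤ ((2 * (Fintype.card F) ^ (t + s - 2 * k)
            * (Fintype.card F).choose (k - 1) * (t - k + 1) : ℕ) : ℚ)
        / (((Fintype.card F).choose (t + s - k) * k : ℕ) : ℚ) :=
  stmt12_general k s t hk hks htk g
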